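/- For all natural numbers i and j, ∑_{k=0}^{i} (−1)^{j+k} · t_{ik} · q_{kj} = (1 if i = j, else 0), where t_{ik} is the coefficient of x^i in (1+2x)·(x(1+x))^k ∈ ℝ[[x]] and q_{kj} is the coefficient of x^k in W(x)·(xC(x))^j ∈ ℝ[[x]] with W(x) = ∑_{n≥0} binom(2n,n) xⁿ. (In matrix form this says D(𝕃^S)⁻¹D = (W(x), xC(x)).) -/

import Mathlib

open PowerSeries Finset

/-- The generating function of the Catalan numbers. -/
noncomputable def catalanGF : PowerSeries ℝ :=
  PowerSeries.mk fun n => (catalan n : ℝ)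

/-- The generating function `W(x) = ∑ binom(2n,n) xⁿ` of the central binomial coefficients. -/
noncomputable def centralBinomGF : PowerSeries ℝ :=
  PowerSeries.mk fun n => ((2 * n).choose n : ℝ)

/-!
Substitute `x ↦ -x(1+x)`. The series `y = xC(x)` satisfies `y = x + y²`, so its image `u`
satisfies `(u + x)(u - 1 - x) = 0`; as `u - 1 - x` is a unit, `u = -x`. Differentiating
`y = x + y²` gives `W·(1 - 2xC) = 1` (because `y' = W`), whose image is `W(-x(1+x))·(1 + 2x) = 1`.
Hence `(1 + 2x)·(W·(xC)^j)(-x(1+x)) = (-x)^j`, and the coefficient of `x^i` of the left side is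
`(-1)^j` times the sum in the theorem.
-/

namespace PowerSeries

variable {R : Type*} [CommRing R]

lemma neg_pow_eq_C_mul (F : R⟦X⟧) (n : ℕ) : (-F) ^ n = C ((-1 : R) ^ n) * F ^ n := by
  rw [neg_pow, map_pow, map_neg, map_one]

lemma coeff_subst_eq_sum_range {A : R⟦X⟧} (hA : constantCoeff A = 0) (G : R⟦X⟧) {q N : ℕ}
    (hq : q < N) : coeff q (G.subst A) = ∑ d ∈ range N, coeff d G * coeff q (A ^ d) := by
  rw [coeff_subst' (HasSubst.of_constantCoeff_zero' hA),
    finsum_eq_sum_of_support_subset _ (s := range N)]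
  · simp only [smul_eq_mul]
  · intro d hd
    rw [coe_range, Set.mem_Iio]
    by_contra! hNd
    have hXA : X ^ d ∣ A ^ d := pow_dvd_pow_of_dvd (X_dvd_iff.mpr hA) d
    exact hd (show coeff d G • coeff q (A ^ d) = 0 by
      rw [X_pow_dvd_iff.mp hXA q (by omega), smul_zero])

lemma coeff_mul_subst {A : R⟦X⟧} (hA : constantCoeff A = 0) (H G : R⟦X⟧) (i : ℕ) :
    coeff i (H * G.subst A) = ∑ k ∈ range (i + 1), coeff k G * coeff i (H * A ^ k) := by
  simp only [coeff_mul i H, mul_sum]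
  rw [sum_comm]
  refine sum_congr rfl fun p hp => ?_
  rw [coeff_subst_eq_sum_range hA G (Nat.antidiagonal.snd_lt hp), mul_sum]
  exact sum_congr rfl fun k _ => by ring

lemma subst_eq_neg_X_of_eq_X_add_sq {y : R⟦X⟧} (hy0 : constantCoeff y = 0)
    (hy : y = X + y ^ 2) : y.subst (-(X * (1 + X)) : R⟦X⟧) = -X := by
  have hA0 : constantCoeff (-(X * (1 + X)) : R⟦X⟧) = 0 := by simp
  have hA : HasSubst (-(X * (1 + X)) : R⟦X⟧) := HasSubst.of_constantCoeff_zero' hA0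
  set u := y.subst (-(X * (1 + X)) : R⟦X⟧)
  have hu : u = -(X * (1 + X)) + u ^ 2 := by
    simpa only [map_add, map_pow, substAlgHom_X, coe_substAlgHom] using
      congrArg (substAlgHom hA) hy
  have hu0 : constantCoeff u = 0 := constantCoeff_subst_eq_zero hA0 y hy0
  have hunit : IsUnit (u - 1 - X) := by
    rw [isUnit_iff_constantCoeff]
    simp [hu0]
  have hfactor : (u + X) * (u - 1 - X) = 0 := by linear_combination -hu
  exact eq_neg_of_add_eq_zero_left (hunit.mul_left_eq_zero.mp hfactor)

end PowerSeries

lemma catalanGF_eq_map : catalanGF = map (Nat.castRingHom ℝ) catalanSeries := by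
  ext n
  simp [catalanGF]

lemma X_mul_catalanGF_eq : X * catalanGF = X + (X * catalanGF) ^ 2 := by
  have h := congrArg (map (Nat.castRingHom ℝ)) catalanSeries_sq_mul_X_add_one
  simp only [map_add, map_mul, map_pow, map_X, map_one, ← catalanGF_eq_map] at h
  linear_combination (-X) * h

lemma derivative_X_mul_catalanGF : d⁄dX ℝ (X * catalanGF) = centralBinomGF := by
  ext n
  rw [coeff_derivative, coeff_succ_X_mul]
  simp only [catalanGF, centralBinomGF, coeff_mk]
  have h : ((n + 1) * catalan n : ℝ) = ((2 * n).choose n : ℝ) := by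
    exact_mod_cast succ_mul_catalan_eq_centralBinom n
  linear_combination h

lemma centralBinomGF_mul_one_sub_two_mul : centralBinomGF * (1 - 2 * (X * catalanGF)) = 1 := by
  have hd := congrArg (d⁄dX ℝ) X_mul_catalanGF_eq
  rw [derivative_X_mul_catalanGF, map_add, derivative_X, sq, Derivation.leibniz,
    derivative_X_mul_catalanGF] at hd
  simp only [smul_eq_mul] at hd
  linear_combination hd

lemma subst_X_mul_catalanGF : (X * catalanGF).subst (-(X * (1 + X)) : ℝ⟦X⟧) = -X :=
  subst_eq_neg_X_of_eq_X_add_sq (by simp) X_mul_catalanGF_eq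

lemma one_add_two_mul_X_mul_subst_centralBinomGF :
    (1 + 2 * X) * centralBinomGF.subst (-(X * (1 + X)) : ℝ⟦X⟧) = 1 := by
  have hA : HasSubst (-(X * (1 + X)) : ℝ⟦X⟧) := HasSubst.of_constantCoeff_zero' (by simp)
  have h := congrArg (substAlgHom hA) centralBinomGF_mul_one_sub_two_mul
  rw [map_mul, map_sub, map_one, map_mul _ 2, map_ofNat, coe_substAlgHom,
    subst_X_mul_catalanGF] at h
  linear_combination h

lemma one_add_two_mul_X_mul_subst_centralBinomGF_mul_pow (j : ℕ) :
    (1 + 2 * X) * (centralBinomGF * (X * catalanGF) ^ j).subst (-(X * (1 + X)) : ℝ⟦X⟧) =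
      (-X) ^ j := by
  have hA : HasSubst (-(X * (1 + X)) : ℝ⟦X⟧) := HasSubst.of_constantCoeff_zero' (by simp)
  rw [subst_mul hA, subst_pow hA, subst_X_mul_catalanGF]
  linear_combination (-X : ℝ⟦X⟧) ^ j * one_add_two_mul_X_mul_subst_centralBinomGF

/-- `D(𝕃^S)⁻¹D = (W(x), xC(x))`: the matrix with `(i,j)` entry the coefficient of `x^i` in
`W(x)·(xC(x))^j` is the inverse of the matrix with `(i,j)` entry `(-1)^(i+j)` times the
coefficient of `x^i` in `(1+2x)·(x(1+x))^j`. -/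
theorem stmt_1 (i j : ℕ) :
    (∑ k ∈ Finset.range (i + 1),
        (-1 : ℝ) ^ (j + k) *
          (PowerSeries.coeff i
            ((1 + 2 * PowerSeries.X) * (PowerSeries.X * (1 + PowerSeries.X)) ^ k)) *
          (PowerSeries.coeff k (centralBinomGF * (PowerSeries.X * catalanGF) ^ j))) =
      if i = j then (1 : ℝ) else 0 := by
  have hcoeff := congrArg (coeff i) (one_add_two_mul_X_mul_subst_centralBinomGF_mul_pow j)
  rw [coeff_mul_subst (by simp), neg_pow_eq_C_mul, coeff_C_mul_X_pow] at hcoeff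
  have hterm : ∀ k ∈ range (i + 1),
      (-1 : ℝ) ^ (j + k) * coeff i ((1 + 2 * X) * (X * (1 + X)) ^ k) *
          coeff k (centralBinomGF * (X * catalanGF) ^ j) =
        (-1) ^ j * (coeff k (centralBinomGF * (X * catalanGF) ^ j) *
          coeff i ((1 + 2 * X) * (-(X * (1 + X))) ^ k)) := fun k _ => by
    rw [neg_pow_eq_C_mul, mul_left_comm (1 + 2 * X), coeff_C_mul, pow_add]
    ring
  rw [sum_congr rfl hterm, ← mul_sum, hcoeff]
  split_ifs
  · rw [← mul_pow, neg_one_mul, neg_neg, one_pow]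
  · rw [mul_zero]
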